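/- arXiv:2603.13953 — 3 statements merged into one kernel-verified Lean document; each statement's English description precedes it below -/
import Mathlib

section
/- Let k ≥ 2 be an integer, let i, j ∈ {0,1,…,k−1}. If a permutation π of {1,…,k} is chosen uniformly at random among all k! permutations, then the covariance of X_k(i/k, j/k) and X_k((i+1)/k, (j+1)/k) equals ij(k−i−1)(k−j−1)/(k⁴(k−1)). -/
open Nat Finset

/-- `Nperm k π i j` is the number of `m ∈ {1,…,k}` with `m ≤ i` and `π(m) ≤ j`,
where the permutation `π` of `{1,…,k}` is represented 0-indexed on `Fin k`. -/
def Nperm (k : ℕ) (π : Equiv.Perm (Fin k)) (i j : ℕ) : ℕ :=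
  (Finset.univ.filter fun m : Fin k => (m : ℕ) < i ∧ ((π m : ℕ) < j)).card

noncomputable def indR (t x : ℕ) : ℝ := if x < t then 1 else 0

lemma card_lt' (k j : ℕ) (hj : j ≤ k) :
    ((Finset.univ.filter fun c : Fin k => (c : ℕ) < j)).card = j := by
  have h : ((Finset.univ.filter fun c : Fin k => (c : ℕ) < j)).card
      = (Finset.range j).card := by
    refine Finset.card_bij (fun c _ => (c : ℕ)) ?_ ?_ ?_
    · intro a ha; simp only [Finset.mem_filter] at ha; exact Finset.mem_range.mpr ha.2
    · intro a ha b hb h; exact Fin.val_injective h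
    · intro b hb
      exact ⟨⟨b, lt_of_lt_of_le (Finset.mem_range.mp hb) hj⟩, by simp [Finset.mem_range.mp hb], rfl⟩
  rw [h, Finset.card_range]

lemma sum_indR (k j : ℕ) (hj : j ≤ k) :
    ∑ c : Fin k, indR j (c : ℕ) = j := by
  unfold indR
  rw [Finset.sum_boole, card_lt' k j hj]

lemma indR_mul_succ (j x : ℕ) : indR j x * indR (j+1) x = indR j x := by
  unfold indR
  by_cases h : x < j
  · simp [h, Nat.lt_succ_of_lt h]
  · simp [h]

lemma nperm_cast (k i j : ℕ) (π : Equiv.Perm (Fin k)) :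
    (Nperm k π i j : ℝ) = ∑ m : Fin k, indR i (m : ℕ) * indR j ((π m : ℕ)) := by
  rw [Nperm, Finset.card_filter]
  push_cast
  apply Finset.sum_congr rfl
  intro m _
  unfold indR
  by_cases h1 : (m : ℕ) < i <;> by_cases h2 : ((π m : ℕ)) < j <;> simp [h1, h2]

lemma sum_perm_apply {n : ℕ} (m : Fin (n+1)) (f : Fin (n+1) → ℝ) :
    ∑ π : Equiv.Perm (Fin (n+1)), f (π m) = n ! * ∑ a, f a := by
  have h1 : ∑ π : Equiv.Perm (Fin (n+1)), f (π 0)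
      = ∑ π : Equiv.Perm (Fin (n+1)), f (π m) := by
    rw [← Equiv.sum_comp (Equiv.mulRight (Equiv.swap 0 m)) (fun σ => f (σ m))]
    apply Finset.sum_congr rfl; intro π _
    simp [Equiv.Perm.mul_apply]
  rw [← h1, ← Equiv.sum_comp (Equiv.Perm.decomposeFin).symm (fun σ => f (σ 0)),
    Fintype.sum_prod_type]
  simp [Equiv.Perm.decomposeFin_symm_apply_zero, Finset.sum_const, Fintype.card_perm,
    Finset.mul_sum, mul_comm]

lemma sum_perm_apply_pair {n : ℕ} (m m' : Fin (n+2)) (hmm : m ≠ m')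
    (g : Fin (n+2) → Fin (n+2) → ℝ) :
    ∑ π : Equiv.Perm (Fin (n+2)), g (π m) (π m')
      = n ! * ∑ p, ((∑ c, g p c) - g p p) := by
  set s : Equiv.Perm (Fin (n+2)) := Equiv.swap 0 m with hs
  set τ : Equiv.Perm (Fin (n+2)) := (Equiv.swap (s 1) m') * s with hτ
  have hms1 : m ≠ s 1 := by
    rcases eq_or_ne m 1 with rfl | hm1
    · simp [hs, Equiv.swap_apply_right]
    · rw [hs, Equiv.swap_apply_of_ne_of_ne (by norm_num) (Ne.symm hm1)]
      exact hm1
  have hτ0 : τ 0 = m := by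
    rw [hτ, Equiv.Perm.mul_apply, hs, Equiv.swap_apply_left,
      Equiv.swap_apply_of_ne_of_ne hms1 hmm]
  have hτ1 : τ 1 = m' := by
    rw [hτ, Equiv.Perm.mul_apply, Equiv.swap_apply_left]
  have h1 : ∑ π : Equiv.Perm (Fin (n+2)), g (π 0) (π 1)
      = ∑ π : Equiv.Perm (Fin (n+2)), g (π m) (π m') := by
    rw [← Equiv.sum_comp (Equiv.mulRight τ) (fun σ => g (σ 0) (σ 1))]
    apply Finset.sum_congr rfl; intro π _
    simp [Equiv.Perm.mul_apply, hτ0, hτ1]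
  rw [← h1, ← Equiv.sum_comp (Equiv.Perm.decomposeFin).symm
      (fun σ : Equiv.Perm (Fin (n+2)) => g (σ 0) (σ 1)),
    Fintype.sum_prod_type]
  have h2 : ∀ p : Fin (n+2),
      ∑ e : Equiv.Perm (Fin (n+1)),
        g (Equiv.Perm.decomposeFin.symm (p, e) 0) (Equiv.Perm.decomposeFin.symm (p, e) 1)
      = n ! * ((∑ c, g p c) - g p p) := by
    intro p
    simp only [Equiv.Perm.decomposeFin_symm_apply_zero, Equiv.Perm.decomposeFin_symm_apply_one]
    rw [sum_perm_apply 0 (fun b => g p (Equiv.swap 0 p b.succ))]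
    congr 1
    have h3 : ∑ c, g p c = ∑ c, g p (Equiv.swap 0 p c) :=
      (Equiv.sum_comp (Equiv.swap 0 p) (fun c => g p c)).symm
    rw [h3]
    conv_rhs => rw [Fin.sum_univ_succ]
    simp [Equiv.swap_apply_left]
  rw [Finset.sum_congr rfl (fun p _ => h2 p), ← Finset.mul_sum]

lemma E1 (n i j : ℕ) (hj : j ≤ n+2) :
    ∑ π : Equiv.Perm (Fin (n+2)), (Nperm (n+2) π i j : ℝ)
      = (n+1)! * ((∑ m : Fin (n+2), indR i (m : ℕ)) * j) := by
  simp_rw [nperm_cast]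
  rw [Finset.sum_comm]
  have h : ∀ m : Fin (n+2),
      ∑ π : Equiv.Perm (Fin (n+2)), indR i (m : ℕ) * indR j ((π m : ℕ))
      = indR i (m : ℕ) * ((n+1)! * j) := by
    intro m
    rw [← Finset.mul_sum,
      sum_perm_apply (n := n+1) m (fun b => indR j (b : ℕ)), sum_indR _ _ hj]
  rw [Finset.sum_congr rfl (fun m _ => h m), ← Finset.sum_mul]
  ring

lemma E1' (n i j : ℕ) (hi : i ≤ n+2) (hj : j ≤ n+2) :
    ∑ π : Equiv.Perm (Fin (n+2)), (Nperm (n+2) π i j : ℝ) = (n+1)! * (i * j) := by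
  rw [E1 n i j hj, sum_indR _ _ hi]

lemma E2 (n i j : ℕ) (hi : i + 1 ≤ n+2) (hj : j + 1 ≤ n+2) :
    ∑ π : Equiv.Perm (Fin (n+2)), (Nperm (n+2) π i j : ℝ) * (Nperm (n+2) π (i+1) (j+1) : ℝ)
      = (n+1)! * (i * j) + n ! * (i^2 * j^2) := by
  have hi' : i ≤ n + 2 := le_trans (Nat.le_succ i) hi
  have hj' : j ≤ n + 2 := le_trans (Nat.le_succ j) hj
  -- P m m' : sum over π of the pair indicator
  have claim1 : ∀ m : Fin (n+2),
      ∑ π : Equiv.Perm (Fin (n+2)), indR j ((π m : ℕ)) * indR (j+1) ((π m : ℕ))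
        = (n+1)! * j := by
    intro m
    simp_rw [indR_mul_succ]
    rw [sum_perm_apply (n := n+1) m (fun b => indR j (b : ℕ)), sum_indR _ _ hj']
  have claim2 : ∀ m m' : Fin (n+2), m ≠ m' →
      ∑ π : Equiv.Perm (Fin (n+2)), indR j ((π m : ℕ)) * indR (j+1) ((π m' : ℕ))
        = n ! * (j^2) := by
    intro m m' hmm
    rw [sum_perm_apply_pair m m' hmm (fun p c => indR j (p : ℕ) * indR (j+1) (c : ℕ))]
    congr 1
    have h4 : ∀ p : Fin (n+2),
        ((∑ c : Fin (n+2), indR j (p : ℕ) * indR (j+1) (c : ℕ))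
          - indR j (p : ℕ) * indR (j+1) (p : ℕ))
        = indR j (p : ℕ) * (j+1) - indR j (p : ℕ) := by
      intro p
      rw [← Finset.mul_sum, sum_indR _ _ hj, indR_mul_succ]
      push_cast; ring
    rw [Finset.sum_congr rfl (fun p _ => h4 p), Finset.sum_sub_distrib,
      ← Finset.sum_mul, sum_indR _ _ hj']
    ring
  -- expand things
  simp_rw [nperm_cast, Finset.sum_mul_sum]
  rw [Finset.sum_comm]
  have hswap : ∀ m : Fin (n+2),
      ∑ π : Equiv.Perm (Fin (n+2)), ∑ m' : Fin (n+2),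
        indR i (m : ℕ) * indR j ((π m : ℕ)) * (indR (i+1) (m' : ℕ) * indR (j+1) ((π m' : ℕ)))
      = ∑ m' : Fin (n+2), ∑ π : Equiv.Perm (Fin (n+2)),
        indR i (m : ℕ) * indR j ((π m : ℕ)) * (indR (i+1) (m' : ℕ) * indR (j+1) ((π m' : ℕ))) :=
    fun m => Finset.sum_comm
  rw [Finset.sum_congr rfl (fun m _ => hswap m)]
  -- inner sum over π for fixed m, m'
  have hinner : ∀ m m' : Fin (n+2),
      ∑ π : Equiv.Perm (Fin (n+2)),
        indR i (m : ℕ) * indR j ((π m : ℕ)) * (indR (i+1) (m' : ℕ) * indR (j+1) ((π m' : ℕ)))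
      = (indR i (m : ℕ) * indR (i+1) (m' : ℕ)) *
        (∑ π : Equiv.Perm (Fin (n+2)), indR j ((π m : ℕ)) * indR (j+1) ((π m' : ℕ))) := by
    intro m m'
    rw [Finset.mul_sum]
    apply Finset.sum_congr rfl
    intro π _; ring
  have hrow : ∀ m : Fin (n+2),
      ∑ m' : Fin (n+2), ∑ π : Equiv.Perm (Fin (n+2)),
        indR i (m : ℕ) * indR j ((π m : ℕ)) * (indR (i+1) (m' : ℕ) * indR (j+1) ((π m' : ℕ)))
      = indR i (m : ℕ) * ((n+1)! * j + i * (n ! * j^2)) := by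
    intro m
    rw [Finset.sum_congr rfl (fun m' _ => hinner m m')]
    rw [← Finset.add_sum_erase _ _ (Finset.mem_univ m)]
    have hdiag : indR i (m : ℕ) * indR (i+1) (m : ℕ) *
        (∑ π : Equiv.Perm (Fin (n+2)), indR j ((π m : ℕ)) * indR (j+1) ((π m : ℕ)))
        = indR i (m : ℕ) * ((n+1)! * j) := by
      rw [claim1 m, indR_mul_succ]
    have hoff : ∑ m' ∈ Finset.univ.erase m,
        indR i (m : ℕ) * indR (i+1) (m' : ℕ) *
        (∑ π : Equiv.Perm (Fin (n+2)), indR j ((π m : ℕ)) * indR (j+1) ((π m' : ℕ)))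
        = indR i (m : ℕ) * (n ! * j^2) *
          (∑ m' ∈ Finset.univ.erase m, indR (i+1) (m' : ℕ)) := by
      rw [Finset.mul_sum]
      apply Finset.sum_congr rfl
      intro m' hm'
      rw [claim2 m m' (Ne.symm (Finset.ne_of_mem_erase hm'))]
      ring
    rw [hdiag, hoff, Finset.sum_erase_eq_sub (Finset.mem_univ m), sum_indR _ _ hi]
    -- now pointwise in m : indR i m * indR (i+1) m relation
    by_cases h : (m : ℕ) < i
    · have h2 : (m : ℕ) < i + 1 := Nat.lt_succ_of_lt h
      unfold indR
      simp only [if_pos h, if_pos h2]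
      push_cast; ring
    · unfold indR
      simp only [if_neg h]
      ring
  rw [Finset.sum_congr rfl (fun m _ => hrow m), ← Finset.sum_mul, sum_indR _ _ hi']
  ring
/-- The covariance of `X_k(i/k, j/k)` and `X_k(i + 1/k, j + 1/k)` under the uniform
distribution on the `k!` permutations equals `ij(k−i−1)(k−j−1)/(k⁴(k−1))`. -/
theorem stmt_14 (k i j : ℕ) (hk : 2 ≤ k) (hi : i < k) (hj : j < k) :
    (1 / (k ! : ℝ)) * (∑ π : Equiv.Perm (Fin k),
          ((Nperm k π (i) (j) : ℝ) / k) * ((Nperm k π (i + 1) (j + 1) : ℝ) / k)) -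
        ((1 / (k ! : ℝ)) * ∑ π : Equiv.Perm (Fin k), (Nperm k π (i) (j) : ℝ) / k) *
          ((1 / (k ! : ℝ)) * ∑ π : Equiv.Perm (Fin k), (Nperm k π (i + 1) (j + 1) : ℝ) / k) =
      (i : ℝ) * j * ((k : ℝ) - i - 1) * ((k : ℝ) - j - 1) / ((k : ℝ) ^ 4 * ((k : ℝ) - 1)) := by
  obtain ⟨n, rfl⟩ : ∃ n, k = n + 2 := ⟨k - 2, by omega⟩
  have hi1 : i + 1 ≤ n + 2 := hi
  have hj1 : j + 1 ≤ n + 2 := hj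
  have hi' : i ≤ n + 2 := by omega
  have hj' : j ≤ n + 2 := by omega
  have e1 : ∑ π : Equiv.Perm (Fin (n+2)),
        ((Nperm (n+2) π i j : ℝ) / ((n+2 : ℕ) : ℝ)) *
          ((Nperm (n+2) π (i+1) (j+1) : ℝ) / ((n+2 : ℕ) : ℝ))
      = (((n+1)! : ℝ) * (i*j) + (n ! : ℝ) * (i^2*j^2)) / (((n+2 : ℕ) : ℝ) * ((n+2 : ℕ) : ℝ)) := by
    rw [← E2 n i j hi1 hj1, Finset.sum_div]
    apply Finset.sum_congr rfl; intro π _; ring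
  have e2 : ∑ π : Equiv.Perm (Fin (n+2)), (Nperm (n+2) π i j : ℝ) / ((n+2 : ℕ) : ℝ)
      = ((n+1)! : ℝ) * (i*j) / ((n+2 : ℕ) : ℝ) := by
    rw [← E1' n i j hi' hj', Finset.sum_div]
  have e3 : ∑ π : Equiv.Perm (Fin (n+2)), (Nperm (n+2) π (i+1) (j+1) : ℝ) / ((n+2 : ℕ) : ℝ)
      = ((n+1)! : ℝ) * ((i+1)*(j+1)) / ((n+2 : ℕ) : ℝ) := by
    rw [← Finset.sum_div, E1' n (i+1) (j+1) hi1 hj1]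
    push_cast; ring
  rw [e1, e2, e3]
  have hfact : ((n+2)! : ℝ) = ((n+2 : ℕ) : ℝ) * (((n+1 : ℕ)) : ℝ) * ((n ! : ℕ) : ℝ) := by
    rw [Nat.factorial_succ, Nat.factorial_succ]
    push_cast; ring
  have hfact1 : ((n+1)! : ℝ) = (((n+1 : ℕ)) : ℝ) * ((n ! : ℕ) : ℝ) := by
    rw [Nat.factorial_succ]; push_cast; ring
  rw [hfact, hfact1]
  have h0 : ((n ! : ℕ) : ℝ) ≠ 0 := Nat.cast_ne_zero.mpr (Nat.factorial_ne_zero n)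
  have h1 : (((n+1 : ℕ)) : ℝ) ≠ 0 := by push_cast; positivity
  have h2 : (((n+2 : ℕ)) : ℝ) ≠ 0 := by push_cast; positivity
  push_cast
  have h3 : ((n : ℝ) + 2) - 1 ≠ 0 := by nlinarith [Nat.cast_nonneg (α := ℝ) n]
  field_simp
  ring
end

section
/- Let k ≥ 2 be an integer, let i, j ∈ {0,1,…,k−1}. If a permutation π of {1,…,k} is chosen uniformly at random among all k! permutations, then the covariance of X_k((i+1)/k, j/k) and X_k(i/k, (j+1)/k) equals ij(k−i−1)(k−j−1)/(k⁴(k−1)). -/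
open Nat Finset

section helpers
variable {k : ℕ}

/-- fibers of π ↦ π m all have the same cardinality -/
lemma fib1_eq (m v w : Fin k) :
    (univ.filter fun π : Equiv.Perm (Fin k) => π m = v).card
      = (univ.filter fun π : Equiv.Perm (Fin k) => π m = w).card := by
  apply Finset.card_equiv (Equiv.mulLeft (Equiv.swap v w))
  intro π
  simp only [mem_filter, mem_univ, true_and, Equiv.coe_mulLeft, Equiv.Perm.mul_apply]
  constructor
  · rintro rfl; exact Equiv.swap_apply_left _ _
  · intro h
    have := congrArg (Equiv.swap v w) h
    simpa [Equiv.swap_apply_right] using this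

lemma fib1_card (hk : 0 < k) (m v : Fin k) :
    (univ.filter fun π : Equiv.Perm (Fin k) => π m = v).card = (k - 1)! := by
  set c := (univ.filter fun π : Equiv.Perm (Fin k) => π m = v).card with hc
  have hsum : (univ : Finset (Equiv.Perm (Fin k))).card
      = ∑ w : Fin k, (univ.filter fun π : Equiv.Perm (Fin k) => π m = w).card :=
    Finset.card_eq_sum_card_fiberwise (fun π _ => mem_univ (π m))
  have hconst : ∀ w : Fin k, (univ.filter fun π : Equiv.Perm (Fin k) => π m = w).card = c :=
    fun w => fib1_eq m w v
  rw [Finset.sum_congr rfl (fun w _ => hconst w), Finset.sum_const] at hsum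
  simp only [Finset.card_univ, Fintype.card_perm, Fintype.card_fin, smul_eq_mul] at hsum
  obtain ⟨n, rfl⟩ : ∃ n, k = n + 1 := ⟨k - 1, by omega⟩
  simp only [Nat.add_sub_cancel]
  have : (n + 1) * n ! = (n + 1) * c := by
    rw [← Nat.factorial_succ]; simpa using hsum
  exact (Nat.eq_of_mul_eq_mul_left (by omega) this).symm

end helpers

section helpers2
variable {k : ℕ}

lemma exists_perm_pair {v v' w w' : Fin k} (hv : v ≠ v') (hw : w ≠ w') :
    ∃ σ : Equiv.Perm (Fin k), σ v = w ∧ σ v' = w' := by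
  refine ⟨Equiv.swap (Equiv.swap v w v') w' * Equiv.swap v w, ?_, ?_⟩
  · have h1 : Equiv.swap v w v = w := Equiv.swap_apply_left v w
    have hne1 : w ≠ Equiv.swap v w v' := by
      intro h
      have := congrArg (Equiv.swap v w) h
      rw [Equiv.swap_apply_right, Equiv.swap_apply_self] at this
      exact hv this
    simp only [Equiv.Perm.mul_apply, h1]
    exact Equiv.swap_apply_of_ne_of_ne hne1 hw
  · simp only [Equiv.Perm.mul_apply]
    exact Equiv.swap_apply_left _ _

lemma fib2_eq (m m' v v' w w' : Fin k) (hv : v ≠ v') (hw : w ≠ w') :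
    (univ.filter fun π : Equiv.Perm (Fin k) => π m = v ∧ π m' = v').card
      = (univ.filter fun π : Equiv.Perm (Fin k) => π m = w ∧ π m' = w').card := by
  obtain ⟨σ, hσ1, hσ2⟩ := exists_perm_pair hv hw
  apply Finset.card_equiv (Equiv.mulLeft σ)
  intro π
  simp only [mem_filter, mem_univ, true_and, Equiv.coe_mulLeft, Equiv.Perm.mul_apply]
  constructor
  · rintro ⟨rfl, rfl⟩; exact ⟨hσ1, hσ2⟩
  · rintro ⟨h1, h2⟩
    rw [← hσ1] at h1; rw [← hσ2] at h2
    exact ⟨σ.injective h1, σ.injective h2⟩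

lemma fib2_card (hk : 2 ≤ k) {m m' v v' : Fin k} (hm : m ≠ m') (hv : v ≠ v') :
    (univ.filter fun π : Equiv.Perm (Fin k) => π m = v ∧ π m' = v').card = (k - 2)! := by
  set c := (univ.filter fun π : Equiv.Perm (Fin k) => π m = v ∧ π m' = v').card with hc
  have hfib : ∀ a b : Fin k,
      (univ.filter fun π : Equiv.Perm (Fin k) => π m = a ∧ π m' = b).card
        = if a = b then 0 else c := by
    intro a b
    by_cases hab : a = b
    · subst hab
      rw [if_pos rfl, Finset.card_eq_zero, Finset.filter_eq_empty_iff]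
      rintro π - ⟨h1, h2⟩
      exact hm (π.injective (h1.trans h2.symm))
    · rw [if_neg hab]
      exact fib2_eq m m' a b v v' hab hv
  have hsum : (univ : Finset (Equiv.Perm (Fin k))).card
      = ∑ p : Fin k × Fin k,
          (univ.filter fun π : Equiv.Perm (Fin k) => (π m, π m') = p).card :=
    Finset.card_eq_sum_card_fiberwise (fun π _ => mem_univ _)
  have hsum2 : k ! = ∑ a : Fin k, ∑ b : Fin k, if a = b then 0 else c := by
    have hcard : (univ : Finset (Equiv.Perm (Fin k))).card = k ! := by
      simp [Finset.card_univ, Fintype.card_perm]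
    rw [← hcard, hsum, Fintype.sum_prod_type]
    refine Finset.sum_congr rfl fun a _ => Finset.sum_congr rfl fun b _ => ?_
    rw [← hfib a b]
    congr 1
    ext π
    simp [Prod.ext_iff]
  have hrow : ∀ a : Fin k, (∑ b : Fin k, if a = b then 0 else c) + c = k * c := by
    intro a
    have h1 : (∑ b : Fin k, if a = b then 0 else c) + (∑ b : Fin k, if a = b then c else 0)
        = ∑ b : Fin k, c := by
      rw [← Finset.sum_add_distrib]
      refine Finset.sum_congr rfl fun b _ => ?_
      by_cases h : a = b <;> simp [h]
    have h2 : (∑ b : Fin k, if a = b then c else 0) = c := by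
      simp [Finset.sum_ite_eq]
    rw [h2] at h1
    simpa [Finset.card_univ, mul_comm] using h1
  have hkey : k ! + k * c = k * (k * c) := by
    have : k ! + ∑ a : Fin k, c = ∑ a : Fin k, ((∑ b : Fin k, if a = b then 0 else c) + c) := by
      rw [Finset.sum_add_distrib, hsum2]
    rw [Finset.sum_congr rfl (fun a _ => hrow a)] at this
    simpa [Finset.sum_const, Finset.card_univ, mul_comm] using this
  obtain ⟨n, rfl⟩ : ∃ n, k = n + 2 := ⟨k - 2, by omega⟩
  simp only [Nat.add_sub_cancel]
  have hfac : (n + 2)! = (n + 2) * ((n + 1) * n !) := by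
    rw [Nat.factorial_succ, Nat.factorial_succ]
  rw [hfac] at hkey
  have h3 : (n + 2) * ((n + 1) * n ! + c) = (n + 2) * ((n + 2) * c) := by ring_nf; ring_nf at hkey; omega
  have h4 : (n + 1) * n ! + c = (n + 2) * c := Nat.eq_of_mul_eq_mul_left (by omega) h3
  have h5 : (n + 1) * n ! = (n + 1) * c := by
    have : (n + 2) * c = (n + 1) * c + c := by ring
    omega
  exact (Nat.eq_of_mul_eq_mul_left (by omega) h5).symm

end helpers2

section counting
variable {k : ℕ}

lemma card_filter_lt {b : ℕ} (hb : b ≤ k) :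
    (univ.filter fun v : Fin k => (v : ℕ) < b).card = b := by
  have h := Finset.card_nbij (s := univ.filter fun v : Fin k => (v : ℕ) < b)
    (t := Finset.range b) (fun v => (v : ℕ)) ?_ ?_ ?_
  · rwa [Finset.card_range] at h
  · intro a ha; simp only [Finset.mem_coe, mem_filter, mem_univ, true_and] at ha; simpa using ha
  · intro x _ y _ hxy; exact Fin.val_injective hxy
  · intro x hx
    simp only [Finset.coe_range, Set.mem_Iio] at hx
    exact ⟨⟨x, lt_of_lt_of_le hx hb⟩, by simp [hx], rfl⟩

lemma row_card (hk : 0 < k) (m : Fin k) {b : ℕ} (hb : b ≤ k) :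
    (univ.filter fun π : Equiv.Perm (Fin k) => (π m : ℕ) < b).card = b * (k - 1)! := by
  rw [Finset.card_eq_sum_card_fiberwise
    (f := fun π : Equiv.Perm (Fin k) => π m)
    (t := univ.filter fun v : Fin k => (v : ℕ) < b)
    (fun π hπ => by simpa using (mem_filter.mp hπ).2)]
  have : ∀ v ∈ (univ.filter fun v : Fin k => (v : ℕ) < b),
      (((univ.filter fun π : Equiv.Perm (Fin k) => (π m : ℕ) < b).filter
        fun π => π m = v).card) = (k - 1)! := by
    intro v hv
    simp only [mem_filter, mem_univ, true_and] at hv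
    rw [Finset.filter_filter]
    have : (univ.filter fun π : Equiv.Perm (Fin k) => (π m : ℕ) < b ∧ π m = v)
        = univ.filter fun π : Equiv.Perm (Fin k) => π m = v := by
      apply Finset.filter_congr
      intro π _
      constructor
      · exact fun h => h.2
      · exact fun h => ⟨by rw [h]; exact hv, h⟩
    rw [this, fib1_card hk m v]
  rw [Finset.sum_congr rfl this, Finset.sum_const, card_filter_lt hb, smul_eq_mul]

lemma pair_card (hk : 2 ≤ k) {m m' : Fin k} (hm : m ≠ m') {b b' : ℕ}
    (hbb : b ≤ b') (hb' : b' ≤ k) :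
    (univ.filter fun π : Equiv.Perm (Fin k) => (π m : ℕ) < b ∧ (π m' : ℕ) < b').card
      = (b * b' - b) * (k - 2)! := by
  set A := univ.filter fun v : Fin k => (v : ℕ) < b with hA
  set B := univ.filter fun v : Fin k => (v : ℕ) < b' with hB
  have hAB : A ⊆ B := by
    intro x hx
    simp only [hA, hB, mem_filter, mem_univ, true_and] at hx ⊢
    omega
  rw [Finset.card_eq_sum_card_fiberwise
    (f := fun π : Equiv.Perm (Fin k) => (π m, π m'))
    (t := A ×ˢ B)
    (fun π hπ => by
      simp only [Finset.mem_coe, mem_filter, mem_univ, true_and] at hπ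
      simp [hA, hB, Finset.mem_product, hπ.1, hπ.2])]
  have hfib : ∀ p ∈ A ×ˢ B,
      (((univ.filter fun π : Equiv.Perm (Fin k) => (π m : ℕ) < b ∧ (π m' : ℕ) < b').filter
        fun π => (π m, π m') = p).card) = if p.1 = p.2 then 0 else (k - 2)! := by
    rintro ⟨v, v'⟩ hp
    simp only [Finset.mem_product, hA, hB, mem_filter, mem_univ, true_and] at hp
    rw [Finset.filter_filter]
    have heq : (univ.filter fun π : Equiv.Perm (Fin k) =>
          ((π m : ℕ) < b ∧ (π m' : ℕ) < b') ∧ (π m, π m') = (v, v'))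
        = univ.filter fun π : Equiv.Perm (Fin k) => π m = v ∧ π m' = v' := by
      apply Finset.filter_congr
      intro π _
      simp only [Prod.mk.injEq]
      constructor
      · exact fun h => h.2
      · rintro ⟨h1, h2⟩; exact ⟨⟨by rw [h1]; exact hp.1, by rw [h2]; exact hp.2⟩, h1, h2⟩
    rw [heq]
    by_cases hvv : v = v'
    · subst hvv
      rw [if_pos rfl, Finset.card_eq_zero, Finset.filter_eq_empty_iff]
      rintro π - ⟨h1, h2⟩
      exact hm (π.injective (h1.trans h2.symm))
    · rw [if_neg hvv]
      exact fib2_card hk hm hvv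
  rw [Finset.sum_congr rfl hfib]
  have hsplit : (∑ p ∈ A ×ˢ B, if p.1 = p.2 then 0 else (k - 2)!)
      + (∑ p ∈ A ×ˢ B, if p.1 = p.2 then (k - 2)! else 0)
      = (A ×ˢ B).card * (k - 2)! := by
    rw [← Finset.sum_add_distrib,
      Finset.sum_congr rfl (fun p _ => by by_cases h : p.1 = p.2 <;> simp [h] :
        ∀ p ∈ A ×ˢ B, ((if p.1 = p.2 then 0 else (k - 2)!) + if p.1 = p.2 then (k - 2)! else 0)
          = (k - 2)!),
      Finset.sum_const, smul_eq_mul]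
  have hdiag : (∑ p ∈ A ×ˢ B, if p.1 = p.2 then (k - 2)! else 0) = b * (k - 2)! := by
    rw [Finset.sum_product]
    have hrow : ∀ a ∈ A, (∑ x ∈ B, if a = x then (k - 2)! else 0) = (k - 2)! := by
      intro a ha
      rw [Finset.sum_ite_eq]
      exact if_pos (hAB ha)
    rw [Finset.sum_congr rfl hrow, Finset.sum_const, smul_eq_mul, hA,
      card_filter_lt (le_trans hbb hb')]
  rw [hdiag, Finset.card_product, hA, hB, card_filter_lt (le_trans hbb hb'),
    card_filter_lt hb'] at hsplit
  rw [Nat.sub_mul]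
  exact Nat.eq_sub_of_add_eq (by rw [mul_assoc] at hsplit ⊢; exact hsplit)

end counting


section sums
variable {k : ℕ}

lemma sum_ind_card {P : Equiv.Perm (Fin k) → Prop} [DecidablePred P] :
    (∑ π : Equiv.Perm (Fin k), if P π then 1 else 0) = (univ.filter P).card :=
  (Finset.card_filter P univ).symm

lemma sum1 (hk : 0 < k) {a b : ℕ} (ha : a ≤ k) (hb : b ≤ k) :
    (∑ π : Equiv.Perm (Fin k), Nperm k π a b) = a * b * (k - 1)! := by
  have hN : ∀ π : Equiv.Perm (Fin k),
      Nperm k π a b = ∑ m : Fin k, if (m : ℕ) < a ∧ (π m : ℕ) < b then 1 else 0 :=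
    fun π => Finset.card_filter _ _
  rw [Finset.sum_congr rfl (fun π _ => hN π), Finset.sum_comm]
  have hin : ∀ m : Fin k,
      (∑ π : Equiv.Perm (Fin k), if (m : ℕ) < a ∧ (π m : ℕ) < b then 1 else 0)
        = if (m : ℕ) < a then b * (k - 1)! else 0 := by
    intro m
    by_cases hm : (m : ℕ) < a
    · rw [if_pos hm]
      rw [Finset.sum_congr rfl (fun π _ => by simp [hm] :
        ∀ π ∈ (univ : Finset (Equiv.Perm (Fin k))),
          (if (m : ℕ) < a ∧ (π m : ℕ) < b then 1 else 0)
            = if (π m : ℕ) < b then 1 else 0)]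
      rw [sum_ind_card, row_card hk m hb]
    · rw [if_neg hm]
      exact Finset.sum_eq_zero fun π _ => by simp [hm]
  rw [Finset.sum_congr rfl (fun m _ => hin m), ← Finset.sum_filter, Finset.sum_const,
    card_filter_lt ha, smul_eq_mul, mul_assoc]

lemma sum2 (hk : 2 ≤ k) {i j : ℕ} (hi : i < k) (hj : j < k) :
    (∑ π : Equiv.Perm (Fin k), Nperm k π (i + 1) j * Nperm k π i (j + 1))
      = i * (j * (k - 1)!) + (i * i) * ((j * j) * (k - 2)!) := by
  set cD := j * (k - 1)! with hcD
  set cO := (j * j) * (k - 2)! with hcO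
  have hk0 : 0 < k := by omega
  -- step C : the inner permutation count
  have hinner : ∀ m m' : Fin k,
      (∑ π : Equiv.Perm (Fin k),
        (if (m : ℕ) < i + 1 ∧ (π m : ℕ) < j then 1 else 0)
          * (if (m' : ℕ) < i ∧ (π m' : ℕ) < j + 1 then 1 else 0))
      = if (m : ℕ) < i + 1 ∧ (m' : ℕ) < i then (if m = m' then cD else cO) else 0 := by
    intro m m'
    by_cases hmm : (m : ℕ) < i + 1 ∧ (m' : ℕ) < i
    · rw [if_pos hmm]
      have hprod : ∀ π : Equiv.Perm (Fin k),
          (if (m : ℕ) < i + 1 ∧ (π m : ℕ) < j then 1 else 0)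
            * (if (m' : ℕ) < i ∧ (π m' : ℕ) < j + 1 then 1 else 0)
          = if (π m : ℕ) < j ∧ (π m' : ℕ) < j + 1 then 1 else 0 := by
        intro π
        by_cases h1 : (π m : ℕ) < j <;> by_cases h2 : (π m' : ℕ) < j + 1 <;>
          simp [h1, h2, hmm.1, hmm.2]
      rw [Finset.sum_congr rfl (fun π _ => hprod π), sum_ind_card]
      by_cases hm : m = m'
      · subst hm
        rw [if_pos rfl, hcD]
        have : (univ.filter fun π : Equiv.Perm (Fin k) => (π m : ℕ) < j ∧ (π m : ℕ) < j + 1)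
            = univ.filter fun π : Equiv.Perm (Fin k) => (π m : ℕ) < j := by
          apply Finset.filter_congr
          intro π _
          constructor
          · exact fun h => h.1
          · exact fun h => ⟨h, by omega⟩
        rw [this, row_card hk0 m (le_of_lt hj)]
      · rw [if_neg hm, hcO]
        have := pair_card hk hm (b := j) (b' := j + 1) (by omega) (by omega)
        rw [this]
        congr 1
        rw [Nat.mul_succ, Nat.add_sub_cancel]
    · rw [if_neg hmm]
      apply Finset.sum_eq_zero
      intro π _
      rcases not_and_or.mp hmm with h | h <;> simp [h]
  -- step A/B : expand the product of cardinals and swap summation order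
  have hexp : (∑ π : Equiv.Perm (Fin k), Nperm k π (i + 1) j * Nperm k π i (j + 1))
      = ∑ m : Fin k, ∑ m' : Fin k, ∑ π : Equiv.Perm (Fin k),
          (if (m : ℕ) < i + 1 ∧ (π m : ℕ) < j then 1 else 0)
            * (if (m' : ℕ) < i ∧ (π m' : ℕ) < j + 1 then 1 else 0) := by
    have h1 : ∀ π : Equiv.Perm (Fin k),
        Nperm k π (i + 1) j * Nperm k π i (j + 1)
          = ∑ m : Fin k, ∑ m' : Fin k,
              (if (m : ℕ) < i + 1 ∧ (π m : ℕ) < j then 1 else 0)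
                * (if (m' : ℕ) < i ∧ (π m' : ℕ) < j + 1 then 1 else 0) := by
      intro π
      rw [show Nperm k π (i + 1) j
          = ∑ m : Fin k, if (m : ℕ) < i + 1 ∧ (π m : ℕ) < j then 1 else 0 from
        Finset.card_filter _ _,
        show Nperm k π i (j + 1)
          = ∑ m' : Fin k, if (m' : ℕ) < i ∧ (π m' : ℕ) < j + 1 then 1 else 0 from
        Finset.card_filter _ _,
        Finset.sum_mul_sum]
    rw [Finset.sum_congr rfl (fun π _ => h1 π), Finset.sum_comm]
    exact Finset.sum_congr rfl fun m _ => Finset.sum_comm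
  rw [hexp, Finset.sum_congr rfl (fun m _ =>
    Finset.sum_congr rfl fun m' _ => hinner m m')]
  -- step D : count pairs
  have hOle : cO ≤ cD := by
    rw [hcO, hcD]
    obtain ⟨n, rfl⟩ : ∃ n, k = n + 2 := ⟨k - 2, by omega⟩
    simp only [Nat.add_sub_cancel]
    have : (n + 2 - 1)! = (n + 1) * n ! := by
      norm_num [Nat.factorial_succ]
    rw [this]
    have hj' : j * j ≤ j * (n + 1) := Nat.mul_le_mul_left _ (by omega)
    calc j * j * n ! ≤ j * (n + 1) * n ! := Nat.mul_le_mul_right _ hj'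
      _ = j * ((n + 1) * n !) := by ring
  have hco : ∀ m m' : Fin k, (if m = m' then cD else cO) = cO + if m = m' then cD - cO else 0 := by
    intro m m'
    by_cases h : m = m' <;> simp [h, Nat.add_sub_cancel' hOle]
  -- rewrite conjunction ite as nested and use sum_filter
  have step : ∀ m : Fin k,
      (∑ m' : Fin k, if (m : ℕ) < i + 1 ∧ (m' : ℕ) < i then (if m = m' then cD else cO) else 0)
      = if (m : ℕ) < i + 1 then
          (i * cO + if (m : ℕ) < i then cD - cO else 0) else 0 := by
    intro m
    by_cases hm : (m : ℕ) < i + 1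
    · rw [if_pos hm]
      have : ∀ m' : Fin k,
          (if (m : ℕ) < i + 1 ∧ (m' : ℕ) < i then (if m = m' then cD else cO) else 0)
            = if (m' : ℕ) < i then (cO + if m = m' then cD - cO else 0) else 0 := by
        intro m'
        by_cases h' : (m' : ℕ) < i
        · rw [if_pos ⟨hm, h'⟩, if_pos h', hco]
        · rw [if_neg (fun hc => h' hc.2), if_neg h']
      rw [Finset.sum_congr rfl fun m' _ => this m', ← Finset.sum_filter,
        Finset.sum_add_distrib, Finset.sum_const, card_filter_lt (by omega : i ≤ k),
        smul_eq_mul]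
      congr 1
      rw [Finset.sum_ite_eq]
      simp [Finset.mem_filter]
    · rw [if_neg hm]
      apply Finset.sum_eq_zero
      intro m' _
      rw [if_neg (fun hc => hm hc.1)]
  rw [Finset.sum_congr rfl (fun m _ => step m), ← Finset.sum_filter,
    Finset.sum_add_distrib, Finset.sum_const, card_filter_lt (by omega : i + 1 ≤ k),
    smul_eq_mul, ← Finset.sum_filter, Finset.filter_filter]
  have hff : (univ.filter fun m : Fin k => (m : ℕ) < i + 1 ∧ (m : ℕ) < i)
      = univ.filter fun m : Fin k => (m : ℕ) < i :=
    Finset.filter_congr (fun m _ => by omega)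
  rw [hff, Finset.sum_const, card_filter_lt (by omega : i ≤ k), smul_eq_mul]
  have e1 : i * (cD - cO) + i * cO = i * cD := by
    rw [← Nat.mul_add, Nat.sub_add_cancel hOle]
  have e2 : (i + 1) * (i * cO) = i * i * cO + i * cO := by ring
  omega

end sums

/-- The covariance of `X_k(i + 1/k, j/k)` and `X_k(i/k, j + 1/k)` under the uniform
distribution on the `k!` permutations equals `ij(k−i−1)(k−j−1)/(k⁴(k−1))`. -/
theorem stmt_15 (k i j : ℕ) (hk : 2 ≤ k) (hi : i < k) (hj : j < k) :
    (1 / (k ! : ℝ)) * (∑ π : Equiv.Perm (Fin k),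
          ((Nperm k π (i + 1) (j) : ℝ) / k) * ((Nperm k π (i) (j + 1) : ℝ) / k)) -
        ((1 / (k ! : ℝ)) * ∑ π : Equiv.Perm (Fin k), (Nperm k π (i + 1) (j) : ℝ) / k) *
          ((1 / (k ! : ℝ)) * ∑ π : Equiv.Perm (Fin k), (Nperm k π (i) (j + 1) : ℝ) / k) =
      (i : ℝ) * j * ((k : ℝ) - i - 1) * ((k : ℝ) - j - 1) / ((k : ℝ) ^ 4 * ((k : ℝ) - 1)) := by
  have hk0 : 0 < k := by omega
  have h1 : (∑ π : Equiv.Perm (Fin k), Nperm k π (i + 1) j) = (i + 1) * j * (k - 1)! :=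
    sum1 hk0 (by omega) (by omega)
  have h2 : (∑ π : Equiv.Perm (Fin k), Nperm k π i (j + 1)) = i * (j + 1) * (k - 1)! :=
    sum1 hk0 (by omega) (by omega)
  have h3 := sum2 hk hi hj
  have e1 : (∑ π : Equiv.Perm (Fin k),
        ((Nperm k π (i + 1) j : ℝ) / k) * ((Nperm k π i (j + 1) : ℝ) / k))
      = ((∑ π : Equiv.Perm (Fin k), Nperm k π (i + 1) j * Nperm k π i (j + 1) : ℕ) : ℝ)
          / ((k : ℝ) * k) := by
    rw [Nat.cast_sum, Finset.sum_div]
    exact Finset.sum_congr rfl fun π _ => by push_cast; ring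
  have e2 : (∑ π : Equiv.Perm (Fin k), (Nperm k π (i + 1) j : ℝ) / k)
      = ((∑ π : Equiv.Perm (Fin k), Nperm k π (i + 1) j : ℕ) : ℝ) / k := by
    rw [Nat.cast_sum, Finset.sum_div]
  have e3 : (∑ π : Equiv.Perm (Fin k), (Nperm k π i (j + 1) : ℝ) / k)
      = ((∑ π : Equiv.Perm (Fin k), Nperm k π i (j + 1) : ℕ) : ℝ) / k := by
    rw [Nat.cast_sum, Finset.sum_div]
  rw [e1, e2, e3, h1, h2, h3]
  obtain ⟨n, rfl⟩ : ∃ n, k = n + 2 := ⟨k - 2, by omega⟩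
  have hs1 : n + 2 - 1 = n + 1 := rfl
  have hs2 : n + 2 - 2 = n := rfl
  rw [hs1, hs2]
  have hfac2 : ((n + 1)! : ℝ) = (n + 1) * (n ! : ℝ) := by
    rw [Nat.factorial_succ]; push_cast; ring
  have hfac1 : ((n + 2)! : ℝ) = (n + 2) * ((n + 1) * (n ! : ℝ)) := by
    rw [Nat.factorial_succ, ← hfac2]; push_cast; ring
  have hn0 : (n ! : ℝ) ≠ 0 := Nat.cast_ne_zero.mpr (Nat.factorial_ne_zero n)
  have hk1 : ((n : ℝ) + 2) ≠ 0 := by positivity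
  have hk2 : ((n : ℝ) + 1) ≠ 0 := by positivity
  push_cast [hfac1, hfac2]
  have hii : (i : ℝ) ≤ (n : ℝ) + 1 := by exact_mod_cast Nat.lt_succ_iff.mp (by omega : i < (n + 1) + 1)
  have hsub : ((n:ℝ) + 2) - 1 = (n:ℝ) + 1 := by ring
  rw [hsub]
  field_simp
  ring
end

section
/- Let k ≥ 2 be an integer and let (u,v) ∈ [0,1]², written as u = (i+t)/k and v = (j+s)/k with i = ⌊uk⌋, j = ⌊vk⌋, t = uk−i ∈ [0,1), s = vk−j ∈ [0,1). If a permutation π of {1,…,k} is chosen uniformly at random among all k! permutations, then the expected value of the bilinear extension X̂_k(u,v) equals uv. -/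
open Nat Finset

/-- The bilinear (checkerboard) extension `Ĉ_π(u,v)` of the permutation copula `C_π`,
where `u = (i+t)/k`, `v = (j+s)/k` with `i = ⌊uk⌋`, `j = ⌊vk⌋`, `t = uk−i`, `s = vk−j`. -/
noncomputable def Chat (k : ℕ) (π : Equiv.Perm (Fin k)) (i j : ℕ) (t s : ℝ) : ℝ :=
  (1 - t) * (1 - s) * ((Nperm k π i j : ℝ) / k) +
    t * (1 - s) * ((Nperm k π (i + 1) j : ℝ) / k) +
    (1 - t) * s * ((Nperm k π i (j + 1) : ℝ) / k) +
    t * s * ((Nperm k π (i + 1) (j + 1) : ℝ) / k)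

lemma fiber_card (k : ℕ) (hk : 0 < k) (m a : Fin k) :
    (univ.filter fun π : Equiv.Perm (Fin k) => π m = a).card = (k-1)! := by
  have hconst : ∀ b : Fin k,
      (univ.filter fun π : Equiv.Perm (Fin k) => π m = b).card
        = (univ.filter fun π : Equiv.Perm (Fin k) => π m = a).card := by
    intro b
    apply Finset.card_bij (fun π _ => Equiv.swap b a * π)
    · intro π hπ
      simp only [mem_filter, mem_univ, true_and] at hπ ⊢
      simp [hπ]
    · intro π hπ σ hσ h
      exact mul_left_cancel h
    · intro σ hσ
      simp only [mem_filter, mem_univ, true_and] at hσ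
      refine ⟨Equiv.swap b a * σ, ?_, ?_⟩
      · simp [hσ]
      · rw [← mul_assoc]
        simp
  have hpart : ∑ b : Fin k, (univ.filter fun π : Equiv.Perm (Fin k) => π m = b).card
      = (k)! := by
    rw [← Finset.card_eq_sum_card_fiberwise (fun π _ => mem_univ (π m))]
    simp [Fintype.card_perm]
  rw [Finset.sum_congr rfl (fun b _ => hconst b), Finset.sum_const, Finset.card_univ,
    Fintype.card_fin, smul_eq_mul] at hpart
  have hfac : k * (k-1)! = k ! := by
    obtain ⟨n, rfl⟩ := Nat.exists_eq_add_of_le hk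
    simp [Nat.factorial_succ, Nat.add_comm]
  rw [← hfac] at hpart
  exact Nat.eq_of_mul_eq_mul_left hk hpart

lemma fin_filter_lt (k j : ℕ) :
    (univ.filter fun a : Fin k => (a : ℕ) < j).card = min j k := by
  rw [Finset.card_filter]
  rw [Fin.sum_univ_eq_sum_range (fun i => if i < j then 1 else 0)]
  rw [← Finset.card_filter]
  have : (Finset.range k).filter (fun i => i < j) = Finset.range (min j k) := by
    ext x; simp [lt_min_iff, and_comm]
  rw [this, Finset.card_range]

lemma count_lt (k j : ℕ) (hk : 0 < k) (m : Fin k) :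
    (univ.filter fun π : Equiv.Perm (Fin k) => (π m : ℕ) < j).card
      = min j k * (k-1)! := by
  rw [Finset.card_eq_sum_card_fiberwise
    (f := fun π : Equiv.Perm (Fin k) => π m)
    (t := univ.filter fun a : Fin k => (a : ℕ) < j)
    (fun π hπ => by simpa using (mem_filter.mp hπ).2)]
  have : ∀ a ∈ univ.filter (fun a : Fin k => (a : ℕ) < j),
      ((univ.filter fun π : Equiv.Perm (Fin k) => (π m : ℕ) < j).filter
        (fun π => π m = a)).card = (k-1)! := by
    intro a ha
    simp only [mem_filter, mem_univ, true_and] at ha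
    rw [← fiber_card k hk m a]
    congr 1
    ext π
    simp only [mem_filter, mem_univ, true_and]
    constructor
    · rintro ⟨-, h⟩; exact h
    · rintro h; exact ⟨h ▸ ha, h⟩
  rw [Finset.sum_congr rfl this, Finset.sum_const, fin_filter_lt, smul_eq_mul]

lemma sum_Nperm (k i j : ℕ) (hk : 0 < k) :
    ∑ π : Equiv.Perm (Fin k), Nperm k π i j = min i k * (min j k * (k-1)!) := by
  have h1 : ∀ π : Equiv.Perm (Fin k), Nperm k π i j
      = ∑ m : Fin k, if ((m : ℕ) < i ∧ (π m : ℕ) < j) then 1 else 0 := by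
    intro π; rw [Nperm, Finset.card_filter]
  rw [Finset.sum_congr rfl (fun π _ => h1 π), Finset.sum_comm]
  have h2 : ∀ m : Fin k,
      (∑ π : Equiv.Perm (Fin k), if ((m : ℕ) < i ∧ (π m : ℕ) < j) then 1 else 0)
        = if (m : ℕ) < i then min j k * (k-1)! else 0 := by
    intro m
    by_cases hm : (m : ℕ) < i
    · simp only [hm, true_and, if_true]
      rw [← Finset.card_filter]
      exact count_lt k j hk m
    · simp [hm]
  rw [Finset.sum_congr rfl (fun m _ => h2 m), ← Finset.sum_filter, Finset.sum_const,
    fin_filter_lt, smul_eq_mul]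

lemma Esum (k a b : ℕ) (hk : 0 < k) :
    (1 / (k ! : ℝ)) * ∑ π : Equiv.Perm (Fin k), (Nperm k π a b : ℝ)
      = ((min a k : ℕ) : ℝ) * ((min b k : ℕ) : ℝ) / k := by
  have h := sum_Nperm k a b hk
  have hcast : (∑ π : Equiv.Perm (Fin k), (Nperm k π a b : ℝ))
      = ((min a k * (min b k * (k-1)!) : ℕ) : ℝ) := by
    rw [← Nat.cast_sum, h]
  rw [hcast]
  have hfac : (k ! : ℝ) = (k : ℝ) * ((k-1)! : ℝ) := by
    have : k * (k-1)! = k ! := by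
      obtain ⟨n, rfl⟩ := Nat.exists_eq_add_of_le hk
      simp [Nat.factorial_succ, Nat.add_comm]
    exact_mod_cast this.symm
  have hk0 : (0:ℝ) < k := by exact_mod_cast hk
  have hf0 : (0:ℝ) < ((k-1)! : ℝ) := by exact_mod_cast Nat.factorial_pos _
  rw [hfac]
  push_cast
  field_simp

lemma seg (k : ℕ) (hk : 0 < k) (u : ℝ) (hu0 : 0 ≤ u) (hu1 : u ≤ 1)
    (i : ℕ) (t : ℝ) (hi : i = ⌊u * k⌋₊) (ht : t = u * k - i) :
    (1 - t) * ((min i k : ℕ) : ℝ) + t * ((min (i+1) k : ℕ) : ℝ) = u * k := by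
  have hk0 : (0:ℝ) < k := by exact_mod_cast hk
  have huk0 : 0 ≤ u * k := mul_nonneg hu0 hk0.le
  have hukk : u * k ≤ k := by nlinarith
  rcases lt_or_eq_of_le hukk with h | h
  · have hile : (i : ℝ) ≤ u * k := by rw [hi]; exact Nat.floor_le huk0
    have hik : i < k := by exact_mod_cast hile.trans_lt h
    rw [min_eq_left hik.le, min_eq_left hik, ht]
    push_cast
    ring
  · have hi' : i = k := by rw [hi, h, Nat.floor_natCast]
    have ht' : t = 0 := by rw [ht, hi', h]; ring
    rw [hi', ht', min_self, min_eq_right (by omega : k ≤ k + 1)]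
    rw [h]; ring

/-- For `(u,v) ∈ [0,1]²` written as `u = (i+t)/k`, `v = (j+s)/k` with `i = ⌊uk⌋`,
`j = ⌊vk⌋`, `t = uk−i`, `s = vk−j`, the expected value of the bilinear extension
`X̂_k(u,v)` under the uniform distribution on the `k!` permutations equals `uv`. -/
theorem stmt_16 (k : ℕ) (hk : 2 ≤ k) (u v : ℝ)
    (hu : u ∈ Set.Icc (0 : ℝ) 1) (hv : v ∈ Set.Icc (0 : ℝ) 1)
    (i j : ℕ) (t s : ℝ)
    (hi : i = ⌊u * k⌋₊) (hj : j = ⌊v * k⌋₊)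
    (ht : t = u * k - i) (hs : s = v * k - j) :
    (1 / (k ! : ℝ)) * ∑ π : Equiv.Perm (Fin k), Chat k π i j t s = u * v := by
  have hk1 : 0 < k := by omega
  have hk0 : (0:ℝ) < k := by exact_mod_cast hk1
  have hkf0 : (0:ℝ) < (k ! : ℝ) := by exact_mod_cast Nat.factorial_pos k
  have expand : ∑ π : Equiv.Perm (Fin k), Chat k π i j t s =
      (1-t)*(1-s) * ((∑ π : Equiv.Perm (Fin k), (Nperm k π i j : ℝ))/k)
      + t*(1-s) * ((∑ π : Equiv.Perm (Fin k), (Nperm k π (i+1) j : ℝ))/k)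
      + (1-t)*s * ((∑ π : Equiv.Perm (Fin k), (Nperm k π i (j+1) : ℝ))/k)
      + t*s * ((∑ π : Equiv.Perm (Fin k), (Nperm k π (i+1) (j+1) : ℝ))/k) := by
    simp only [Chat, Finset.sum_add_distrib, ← Finset.mul_sum, ← Finset.sum_div]
  have h1 := Esum k i j hk1
  have h2 := Esum k (i+1) j hk1
  have h3 := Esum k i (j+1) hk1
  have h4 := Esum k (i+1) (j+1) hk1
  set Mi : ℝ := ((min i k : ℕ) : ℝ)
  set Mi1 : ℝ := ((min (i+1) k : ℕ) : ℝ)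
  set Mj : ℝ := ((min j k : ℕ) : ℝ)
  set Mj1 : ℝ := ((min (j+1) k : ℕ) : ℝ)
  have hU : (1 - t) * Mi + t * Mi1 = u * k := seg k hk1 u hu.1 hu.2 i t hi ht
  have hV : (1 - s) * Mj + s * Mj1 = v * k := seg k hk1 v hv.1 hv.2 j s hj hs
  rw [expand]
  have key : ∀ (S : ℝ) (M1 M2 : ℝ), (1/(k ! : ℝ)) * S = M1 * M2 / k →
      S = (k ! : ℝ) * (M1 * M2 / k) := by
    intro S M1 M2 hS
    field_simp at hS ⊢
    linarith
  rw [key _ _ _ h1, key _ _ _ h2, key _ _ _ h3, key _ _ _ h4]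
  have expandgoal : (1/(k ! : ℝ)) *
      ((1-t)*(1-s) * ((k ! : ℝ) * (Mi * Mj / k) / k)
      + t*(1-s) * ((k ! : ℝ) * (Mi1 * Mj / k) / k)
      + (1-t)*s * ((k ! : ℝ) * (Mi * Mj1 / k) / k)
      + t*s * ((k ! : ℝ) * (Mi1 * Mj1 / k) / k))
      = ((1-t)*Mi + t*Mi1) * ((1-s)*Mj + s*Mj1) / (k*k) := by
    field_simp
    ring
  rw [expandgoal, hU, hV]
  field_simp
end
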